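/- Let r > 1, p ≥ r, λ > 0, and let q_λ be the inverse of I_λ(s) = s/λ + s^r. Then the map s ↦ q_λ(s)^p / s is increasing on (0,∞). -/

import Mathlib

/-! Substituting `s = I_λ(x)`, i.e. `x = q_λ(s)`, turns `q_λ(s)^p / s` into `x^p / (x/λ + x^r)`,
which is increasing in `x > 0` because `p` dominates both exponents `1` and `r` of the denominator.
Since `q_λ` is increasing and maps `(0,∞)` to itself, the composite is increasing. -/

open Real Set

noncomputable def Ilam (lam r : ℝ) (s : ℝ) : ℝ := s / lam + s ^ r

def IsQ (lam r : ℝ) (q : ℝ → ℝ) : Prop :=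
  Set.InvOn q (Ilam lam r) (Set.Ici 0) (Set.Ici 0) ∧
    Set.MapsTo q (Set.Ici 0) (Set.Ici 0)

lemma rpow_mul_rpow_le_rpow_mul_rpow {a b u p : ℝ} (ha : 0 < a) (hab : a ≤ b) (hup : u ≤ p) :
    a ^ p * b ^ u ≤ b ^ p * a ^ u := by
  have hb : 0 < b := ha.trans_le hab
  calc a ^ p * b ^ u = a ^ (p - u) * (a ^ u * b ^ u) := by
        rw [← mul_assoc, ← rpow_add ha, sub_add_cancel]
    _ ≤ b ^ (p - u) * (a ^ u * b ^ u) := by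
        gcongr
    _ = b ^ p * a ^ u := by
        rw [mul_left_comm, ← rpow_add hb, sub_add_cancel, mul_comm]

lemma Ilam_pos {lam r x : ℝ} (hlam : 0 < lam) (hx : 0 < x) : 0 < Ilam lam r x := by
  unfold Ilam
  positivity

lemma Ilam_zero {lam r : ℝ} (hr : r ≠ 0) : Ilam lam r 0 = 0 := by
  simp [Ilam, zero_rpow hr]

lemma strictMonoOn_Ilam {lam r : ℝ} (hlam : 0 < lam) (hr : 0 ≤ r) :
    StrictMonoOn (Ilam lam r) (Ici 0) := fun _ hx _ _ hxy =>
  add_lt_add_of_lt_of_le (div_lt_div_of_pos_right hxy hlam) (rpow_le_rpow hx hxy.le hr)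

lemma monotoneOn_rpow_div_Ilam {lam r p : ℝ} (hlam : 0 < lam) (h1p : 1 ≤ p) (hrp : r ≤ p) :
    MonotoneOn (fun x => x ^ p / Ilam lam r x) (Ioi 0) := by
  intro a ha b hb hab
  rw [div_le_div_iff₀ (Ilam_pos hlam ha) (Ilam_pos hlam hb)]
  have h1 : a ^ p * b ≤ b ^ p * a := by
    simpa using rpow_mul_rpow_le_rpow_mul_rpow (u := 1) ha hab h1p
  have hr : a ^ p * b ^ r ≤ b ^ p * a ^ r := rpow_mul_rpow_le_rpow_mul_rpow ha hab hrp
  calc a ^ p * Ilam lam r b = a ^ p * b / lam + a ^ p * b ^ r := by unfold Ilam; ring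
    _ ≤ b ^ p * a / lam + b ^ p * a ^ r := by gcongr
    _ = b ^ p * Ilam lam r a := by unfold Ilam; ring

namespace IsQ

variable {lam r : ℝ} {q : ℝ → ℝ}

lemma monotoneOn (hq : IsQ lam r q) (hlam : 0 < lam) (hr : 0 ≤ r) : MonotoneOn q (Ici 0) :=
  fun s hs t ht hst => by
    rwa [← (strictMonoOn_Ilam hlam hr).le_iff_le (hq.2 hs) (hq.2 ht), hq.1.2 hs, hq.1.2 ht]

lemma mapsTo_Ioi (hq : IsQ lam r q) (hr : r ≠ 0) : MapsTo q (Ioi 0) (Ioi 0) := by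
  intro s (hs : 0 < s)
  refine lt_of_le_of_ne (mem_Ici.mp (hq.2 hs.le)) fun h => hs.ne ?_
  rw [← hq.1.2 hs.le, ← h, Ilam_zero hr]

end IsQ

theorem stmt_7 (r p lam : ℝ) (hr : 1 < r) (hpr : r ≤ p) (hlam : 0 < lam)
    (q : ℝ → ℝ) (hq : IsQ lam r q) :
    MonotoneOn (fun s => q s ^ p / s) (Set.Ioi 0) := by
  have hg := monotoneOn_rpow_div_Ilam (r := r) hlam (hr.le.trans hpr) hpr
  have hcomp := hg.comp ((hq.monotoneOn hlam (by linarith)).mono Ioi_subset_Ici_self)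
    (hq.mapsTo_Ioi (by linarith))
  refine hcomp.congr fun s (hs : 0 < s) => ?_
  simp only [Function.comp_apply, hq.1.2 hs.le]
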